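/- arXiv:1908.09337 — 5 statements merged into one kernel-verified Lean document; each statement's English description precedes it below -/
import Mathlib

section
/- Let Σ̂ be n×n symmetric positive definite, A, C real m×n matrices, B, D real m×k matrices, U a k×n real matrix, z ∈ ℝⁿ, v ∈ ℝᵏ, and Σ⁺ an m×m symmetric matrix. Set K = U Σ̂⁻¹. Then Σ⁺ ⪰ (A + BK) Σ̂ (A + BK)ᵀ + (C + DK) Σ̂ (C + DK)ᵀ + (Cz + Dv)(Cz + Dv)ᵀ if and only if the block matrix [[Σ⁺, A Σ̂ + B U, C Σ̂ + D U, Cz + Dv], [(A Σ̂ + B U)ᵀ, Σ̂, 0, 0], [(C Σ̂ + D U)ᵀ, 0, Σ̂, 0], [(Cz + Dv)ᵀ, 0, 0, I]] is positive semidefinite. -/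
open Matrix

lemma posDef_fromBlocks_diag {p q : Type*} [Fintype p] [Fintype q] [DecidableEq p] [DecidableEq q]
    {A : Matrix p p ℝ} {D : Matrix q q ℝ} (hA : A.PosDef) (hD : D.PosDef) :
    (fromBlocks A 0 0 D).PosDef := by
  rw [posDef_iff_dotProduct_mulVec]
  constructor
  · rw [isHermitian_fromBlocks_iff]
    refine ⟨hA.1, by simp, rfl, hD.1⟩
  · intro x hx
    have hx' : x = Sum.elim (x ∘ Sum.inl) (x ∘ Sum.inr) := by
      ext (i | i) <;> rfl
    rw [hx', fromBlocks_mulVec, dotProduct_block]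
    simp only [Sum.elim_comp_inl, Sum.elim_comp_inr, zero_mulVec, add_zero, zero_add,
      Matrix.zero_mulVec]
    have h1 : x ∘ Sum.inl ≠ 0 ∨ x ∘ Sum.inr ≠ 0 := by
      by_contra h
      push_neg at h
      apply hx
      ext (i | i)
      · exact congrFun h.1 i
      · exact congrFun h.2 i
    rcases h1 with h | h
    · have := hA.dotProduct_mulVec_pos h
      have h2 := hD.posSemidef.dotProduct_mulVec_nonneg (x ∘ Sum.inr)
      simp only [star_trivial, Sum.elim_comp_inl, Sum.elim_comp_inr] at *
      linarith
    · have := hD.dotProduct_mulVec_pos h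
      have h2 := hA.posSemidef.dotProduct_mulVec_nonneg (x ∘ Sum.inl)
      simp only [star_trivial, Sum.elim_comp_inl, Sum.elim_comp_inr] at *
      linarith

/-- Lemma 1 of the paper: the covariance propagation inequality for a linear
system with multiplicative noise, with `K = U Σ̂⁻¹`, is equivalent to an LMI. -/
theorem covariance_propagation_lmi {n m k : ℕ}
    (Sig : Matrix (Fin n) (Fin n) ℝ) (hSig : Sig.PosDef)
    (A C : Matrix (Fin m) (Fin n) ℝ) (B D : Matrix (Fin m) (Fin k) ℝ)
    (U : Matrix (Fin k) (Fin n) ℝ)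
    (z : Matrix (Fin n) (Fin 1) ℝ) (v : Matrix (Fin k) (Fin 1) ℝ)
    (SigP : Matrix (Fin m) (Fin m) ℝ) (hSigP : SigP.IsSymm) :
    (SigP - ((A + B * (U * Sig⁻¹)) * Sig * (A + B * (U * Sig⁻¹))ᵀ
        + (C + D * (U * Sig⁻¹)) * Sig * (C + D * (U * Sig⁻¹))ᵀ
        + (C * z + D * v) * (C * z + D * v)ᵀ)).PosSemidef ↔
      (fromBlocks SigP
        (fromCols (A * Sig + B * U)
          (fromCols (C * Sig + D * U) (C * z + D * v)))
        (fromRows (A * Sig + B * U)ᵀ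
          (fromRows (C * Sig + D * U)ᵀ (C * z + D * v)ᵀ))
        (fromBlocks Sig 0 0
          (fromBlocks Sig 0 0 (1 : Matrix (Fin 1) (Fin 1) ℝ)))).PosSemidef := by
  set X := A * Sig + B * U with hX
  set Y := C * Sig + D * U with hY
  set Z := C * z + D * v with hZ
  set Bblk := fromCols X (fromCols Y Z) with hB
  set Dblk := fromBlocks Sig 0 0 (fromBlocks Sig 0 0 (1 : Matrix (Fin 1) (Fin 1) ℝ)) with hD
  have hSigUnit : IsUnit Sig.det := isUnit_iff_ne_zero.mpr (ne_of_gt hSig.det_pos)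
  have hSS : Sig * Sig⁻¹ = 1 := mul_nonsing_inv _ hSigUnit
  have hSS' : Sig⁻¹ * Sig = 1 := nonsing_inv_mul _ hSigUnit
  have hSigT : Sigᵀ = Sig := hSig.isHermitian.eq
  have hSigInvT : Sig⁻¹ᵀ = Sig⁻¹ := by
    rw [transpose_nonsing_inv, hSigT]
  -- the lower-left block is the conjugate transpose of the upper-right block
  have hBT : fromRows Xᵀ (fromRows Yᵀ Zᵀ) = Bblkᴴ := by
    rw [hB, conjTranspose_fromCols_eq_fromRows_conjTranspose,
      conjTranspose_fromCols_eq_fromRows_conjTranspose]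
    ext (i | i | i) j <;> simp [conjTranspose, starRingEnd_apply]
  have hDpos : Dblk.PosDef :=
    posDef_fromBlocks_diag hSig (posDef_fromBlocks_diag hSig Matrix.PosDef.one)
  -- compute the inverse of the block-diagonal matrix
  have hDinv : Dblk⁻¹ = fromBlocks Sig⁻¹ 0 0 (fromBlocks Sig⁻¹ 0 0 (1 : Matrix (Fin 1) (Fin 1) ℝ)) := by
    apply inv_eq_right_inv
    rw [hD, fromBlocks_multiply, fromBlocks_multiply]
    simp [hSS]
  -- compute the Schur complement term
  have hSchur : Bblk * Dblk⁻¹ * Bblkᴴ =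
      (A + B * (U * Sig⁻¹)) * Sig * (A + B * (U * Sig⁻¹))ᵀ
        + (C + D * (U * Sig⁻¹)) * Sig * (C + D * (U * Sig⁻¹))ᵀ
        + Z * Zᵀ := by
    rw [← hBT, hDinv, hB]
    simp only [fromCols_mul_fromBlocks, fromCols_mul_fromRows, Matrix.mul_zero,
      Matrix.zero_mul, add_zero, zero_add, Matrix.mul_one]
    have key : ∀ (P : Matrix (Fin m) (Fin n) ℝ) (Q : Matrix (Fin m) (Fin k) ℝ),
        (P + Q * (U * Sig⁻¹)) * Sig * (P + Q * (U * Sig⁻¹))ᵀ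
          = (P * Sig + Q * U) * Sig⁻¹ * (P * Sig + Q * U)ᵀ := by
      intro P Q
      have h1 : P + Q * (U * Sig⁻¹) = (P * Sig + Q * U) * Sig⁻¹ := by
        rw [Matrix.add_mul, Matrix.mul_assoc P Sig Sig⁻¹, hSS, Matrix.mul_one,
          Matrix.mul_assoc Q U Sig⁻¹]
      rw [h1, Matrix.transpose_mul, hSigInvT]
      rw [Matrix.mul_assoc, Matrix.mul_assoc, ← Matrix.mul_assoc Sig⁻¹ Sig, hSS', Matrix.one_mul,
        ← Matrix.mul_assoc, Matrix.mul_assoc]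
    rw [hX, hY, ← key A B, ← key C D]
    abel
  haveI : Invertible Dblk :=
    Dblk.invertibleOfIsUnitDet (isUnit_iff_ne_zero.mpr hDpos.det_pos.ne')
  rw [hBT, PosDef.fromBlocks₂₂ _ _ hDpos, hSchur]
end

section
/- Let P be an n×n symmetric positive definite matrix, α > 0, ψ > 0. If ‖P⁻¹‖·α ≤ ψ (operator norm), then for every z ∈ ℝⁿ with zᵀ P z ≤ α, the rank-one matrix z zᵀ satisfies z zᵀ ⪯ ψ·I. -/
open Matrix
open scoped Matrix.Norms.L2Operator RealInnerProductSpace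

-- Cauchy-Schwarz for a PSD quadratic form
lemma cs {n : ℕ} {P : Matrix (Fin n) (Fin n) ℝ} (hP : P.PosSemidef)
    (z w : Fin n → ℝ) :
    (z ⬝ᵥ P.mulVec w) ^ 2 ≤ (z ⬝ᵥ P.mulVec z) * (w ⬝ᵥ P.mulVec w) := by
  have key : ∀ t : ℝ, 0 ≤ (w ⬝ᵥ P.mulVec w) * (t * t)
      + (2 * (z ⬝ᵥ P.mulVec w)) * t + z ⬝ᵥ P.mulVec z := by
    intro t
    have h := hP.dotProduct_mulVec_nonneg (z + t • w)
    simp only [RCLike.star_def, star_trivial] at h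
    have expand : (z + t • w) ⬝ᵥ P.mulVec (z + t • w)
        = z ⬝ᵥ P.mulVec z + 2 * (z ⬝ᵥ P.mulVec w) * t + (w ⬝ᵥ P.mulVec w) * (t * t) := by
      have hPt : Pᵀ = P := by
        rw [← conjTranspose_eq_transpose_of_trivial]; exact hP.1
      have hsym : w ⬝ᵥ P.mulVec z = z ⬝ᵥ P.mulVec w := by
        rw [dotProduct_mulVec, ← mulVec_transpose, hPt, dotProduct_comm]
      simp [mulVec_add, dotProduct_add, add_dotProduct, mulVec_smul, dotProduct_smul,
        smul_dotProduct, smul_eq_mul, hsym]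
      ring
    rw [expand] at h
    linarith
  have hd := discrim_le_zero key
  rw [discrim] at hd
  nlinarith [hd]

/-- Core estimate in Lemma 4: if `‖P⁻¹‖·α ≤ ψ` (operator norm), then every `z`
in the ellipsoid `zᵀPz ≤ α` satisfies `z zᵀ ⪯ ψ·I`. -/
theorem ellipsoid_rank_one_bound {n : ℕ}
    (P : Matrix (Fin n) (Fin n) ℝ) (hP : P.PosDef)
    (α ψ : ℝ) (hα : 0 < α) (hψ : 0 < ψ)
    (hnorm : ‖P⁻¹‖ * α ≤ ψ) :
    ∀ z : Fin n → ℝ, z ⬝ᵥ P.mulVec z ≤ α →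
      (ψ • (1 : Matrix (Fin n) (Fin n) ℝ) - vecMulVec z z).PosSemidef := by
  intro z hz
  have hPinv : (P⁻¹).PosDef := hP.inv
  have hPP : P * P⁻¹ = 1 := mul_nonsing_inv P (isUnit_iff_ne_zero.mpr hP.det_pos.ne')
  rw [posSemidef_iff_dotProduct_mulVec]
  constructor
  · show _ = _
    ext i j
    simp [vecMulVec, conjTranspose, one_apply, mul_comm]
  intro x
  simp only [RCLike.star_def, star_trivial]
  -- compute the quadratic form
  have hquad : x ⬝ᵥ (ψ • (1 : Matrix (Fin n) (Fin n) ℝ) - vecMulVec z z).mulVec x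
      = ψ * (x ⬝ᵥ x) - (z ⬝ᵥ x) ^ 2 := by
    rw [sub_mulVec, dotProduct_sub, smul_mulVec, one_mulVec, dotProduct_smul]
    have hmv : ∀ i, (vecMulVec z z).mulVec x i = z i * (z ⬝ᵥ x) := by
      intro i
      simp [mulVec, vecMulVec, dotProduct, Finset.mul_sum, mul_assoc]
    have h1 : x ⬝ᵥ (vecMulVec z z).mulVec x = (z ⬝ᵥ x) ^ 2 := by
      simp only [dotProduct, hmv]
      rw [sq, Finset.sum_mul]
      exact Finset.sum_congr rfl fun i _ => by ring
    rw [h1, smul_eq_mul]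
  rw [hquad]
  -- Cauchy-Schwarz step
  set w := P⁻¹.mulVec x with hw
  have hPw : P.mulVec w = x := by
    rw [hw, mulVec_mulVec, hPP, one_mulVec]
  have hcs := cs hP.posSemidef z w
  rw [hPw] at hcs
  have hww : w ⬝ᵥ x = x ⬝ᵥ P⁻¹.mulVec x := by
    rw [dotProduct_comm]
  rw [hww] at hcs
  -- operator norm step
  have hop : x ⬝ᵥ P⁻¹.mulVec x ≤ ‖P⁻¹‖ * (x ⬝ᵥ x) := by
    set x' : EuclideanSpace ℝ (Fin n) := (WithLp.equiv 2 _).symm x with hx'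
    set y' : EuclideanSpace ℝ (Fin n) := (WithLp.equiv 2 _).symm (P⁻¹.mulVec x) with hy'
    have h1 : x ⬝ᵥ P⁻¹.mulVec x = (inner ℝ x' y' : ℝ) := by
      simp [PiLp.inner_apply, dotProduct, hx', hy', mul_comm]
    have h2 : (inner ℝ x' y' : ℝ) ≤ ‖x'‖ * ‖y'‖ := real_inner_le_norm x' y'
    have h3 : ‖y'‖ ≤ ‖P⁻¹‖ * ‖x'‖ := P⁻¹.l2_opNorm_mulVec x'
    have h4 : x ⬝ᵥ x = ‖x'‖ * ‖x'‖ := by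
      rw [← real_inner_self_eq_norm_mul_norm]
      simp only [hx', PiLp.inner_apply, dotProduct, RCLike.inner_apply, conj_trivial, WithLp.equiv_symm_apply]
    have hnx : (0:ℝ) ≤ ‖x'‖ := norm_nonneg _
    rw [h1, h4]
    nlinarith [norm_nonneg y']
  have h0 : 0 ≤ z ⬝ᵥ P.mulVec z := by
    have := hP.posSemidef.dotProduct_mulVec_nonneg z; simpa using this
  have h0' : 0 ≤ x ⬝ᵥ P⁻¹.mulVec x := by
    have := hPinv.posSemidef.dotProduct_mulVec_nonneg x; simpa using this
  have hxx : 0 ≤ x ⬝ᵥ x := Finset.sum_nonneg fun i _ => mul_self_nonneg (x i)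
  have hPn : 0 ≤ ‖P⁻¹‖ := norm_nonneg _
  nlinarith [sq_nonneg (z ⬝ᵥ x)]
end

section
/- Let M ∈ ℕ, and for each i ∈ {1,…,M} let W_i ∈ ℝ^{d_i×n} be 0-1 matrices and Γ_i ∈ ℝ^{d_i×d_i} be symmetric matrices such that Σ_{i=1}^M W_iᵀ Γ_i W_i ⪯ 0, and symmetric matrices P_i, Q̄_i, and feedbacks K_i satisfying, for each i, A_iᵀ P_i A_i + C_iᵀ P_i C_i - P̄_i ⪯ -(Q̄_i + K_iᵀ R_i K_i) + Γ_i where P̄_i = W_i T_iᵀ P_i T_i W_iᵀ. Then for any z ∈ ℝⁿ, with z_i = W_i z, it holds that Σ_{i=1}^M [ (A_i z_i)ᵀ P_i' (A_i z_i) + (C_i z_i)ᵀ P_i' (C_i z_i) - z_iᵀ P̄_i z_i ] ≤ - Σ_{i=1}^M z_iᵀ (Q̄_i + K_iᵀ R_i K_i) z_i, where P_i' denotes the appropriate local P weight. -/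
open Matrix

lemma quad_form_conj {a b : Type*} [Fintype a] [Fintype b]
    (B : Matrix a b ℝ) (S : Matrix a a ℝ) (v : b → ℝ) :
    v ⬝ᵥ (Bᵀ * S * B).mulVec v = (B.mulVec v) ⬝ᵥ S.mulVec (B.mulVec v) := by
  rw [show Bᵀ * S * B = Bᵀ * (S * B) from Matrix.mul_assoc _ _ _,
    ← Matrix.mulVec_mulVec, Matrix.dotProduct_mulVec, Matrix.vecMul_transpose,
    Matrix.mulVec_mulVec]

/-- Distributed-to-global summation argument (eqs. (9)–(10)): local matrix
inequalities with relaxation matrices `Γ_i` summing to a negative semidefinite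
matrix imply the global Lyapunov decrease. -/
theorem distributed_lyapunov_sum {M n : ℕ} {d e m : Fin M → ℕ}
    (W : (i : Fin M) → Matrix (Fin (d i)) (Fin n) ℝ)
    (T : (i : Fin M) → Matrix (Fin (e i)) (Fin n) ℝ)
    (hW01 : ∀ i a b, W i a b = 0 ∨ W i a b = 1)
    (A C : (i : Fin M) → Matrix (Fin (e i)) (Fin (d i)) ℝ)
    (K : (i : Fin M) → Matrix (Fin (m i)) (Fin (d i)) ℝ)
    (P : (i : Fin M) → Matrix (Fin (e i)) (Fin (e i)) ℝ)
    (Qbar Γ : (i : Fin M) → Matrix (Fin (d i)) (Fin (d i)) ℝ)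
    (R : (i : Fin M) → Matrix (Fin (m i)) (Fin (m i)) ℝ)
    (hPsym : ∀ i, (P i).IsSymm) (hQsym : ∀ i, (Qbar i).IsSymm)
    (hΓsym : ∀ i, (Γ i).IsSymm) (hRsym : ∀ i, (R i).IsSymm)
    (hΓsum : (-(∑ i, (W i)ᵀ * Γ i * W i)).PosSemidef)
    (hloc : ∀ i,
      ((-(Qbar i + (K i)ᵀ * R i * K i) + Γ i)
        - ((A i)ᵀ * P i * A i + (C i)ᵀ * P i * C i
            - W i * (T i)ᵀ * P i * T i * (W i)ᵀ)).PosSemidef) :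
    ∀ z : Fin n → ℝ,
      (∑ i, (((A i).mulVec ((W i).mulVec z)) ⬝ᵥ
              (P i).mulVec ((A i).mulVec ((W i).mulVec z))
            + ((C i).mulVec ((W i).mulVec z)) ⬝ᵥ
              (P i).mulVec ((C i).mulVec ((W i).mulVec z))
            - ((W i).mulVec z) ⬝ᵥ
              (W i * (T i)ᵀ * P i * T i * (W i)ᵀ).mulVec ((W i).mulVec z)))
        ≤ -∑ i, ((W i).mulVec z) ⬝ᵥ
            (Qbar i + (K i)ᵀ * R i * K i).mulVec ((W i).mulVec z) := by
  intro z
  have hterm : ∀ i : Fin M,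
      (((A i).mulVec ((W i).mulVec z)) ⬝ᵥ (P i).mulVec ((A i).mulVec ((W i).mulVec z))
        + ((C i).mulVec ((W i).mulVec z)) ⬝ᵥ (P i).mulVec ((C i).mulVec ((W i).mulVec z))
        - ((W i).mulVec z) ⬝ᵥ (W i * (T i)ᵀ * P i * T i * (W i)ᵀ).mulVec ((W i).mulVec z))
      ≤ -(((W i).mulVec z) ⬝ᵥ (Qbar i + (K i)ᵀ * R i * K i).mulVec ((W i).mulVec z))
        + ((W i).mulVec z) ⬝ᵥ (Γ i).mulVec ((W i).mulVec z) := by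
    intro i
    have h := (hloc i).dotProduct_mulVec_nonneg ((W i).mulVec z)
    rw [star_trivial] at h
    have e1 := quad_form_conj (A i) (P i) ((W i).mulVec z)
    have e2 := quad_form_conj (C i) (P i) ((W i).mulVec z)
    rw [Matrix.sub_mulVec, dotProduct_sub, sub_nonneg,
      Matrix.add_mulVec, dotProduct_add,
      Matrix.sub_mulVec, dotProduct_sub,
      Matrix.add_mulVec, dotProduct_add,
      Matrix.neg_mulVec, dotProduct_neg] at h
    linarith [h]
  have hΓ : ∑ i, ((W i).mulVec z) ⬝ᵥ (Γ i).mulVec ((W i).mulVec z) ≤ 0 := by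
    have h := hΓsum.dotProduct_mulVec_nonneg z
    rw [star_trivial, Matrix.neg_mulVec, dotProduct_neg] at h
    have hz : z ⬝ᵥ (∑ i, (W i)ᵀ * Γ i * W i).mulVec z
        = ∑ i, ((W i).mulVec z) ⬝ᵥ (Γ i).mulVec ((W i).mulVec z) := by
      have hmv : (∑ i, (W i)ᵀ * Γ i * W i) *ᵥ z = ∑ i, ((W i)ᵀ * Γ i * W i) *ᵥ z := by
        ext j
        simp [Matrix.mulVec, dotProduct, Finset.sum_apply, Finset.sum_mul,
          Matrix.sum_apply]
        rw [Finset.sum_comm]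
      have hds : z ⬝ᵥ (∑ i, ((W i)ᵀ * Γ i * W i) *ᵥ z)
          = ∑ i, z ⬝ᵥ (((W i)ᵀ * Γ i * W i) *ᵥ z) := by
        simp only [dotProduct, Finset.sum_apply, Finset.mul_sum]
        rw [Finset.sum_comm]
      rw [hmv, hds]
      exact Finset.sum_congr rfl fun i _ => quad_form_conj (W i) (Γ i) z
    linarith
  calc (∑ i, (((A i).mulVec ((W i).mulVec z)) ⬝ᵥ (P i).mulVec ((A i).mulVec ((W i).mulVec z))
            + ((C i).mulVec ((W i).mulVec z)) ⬝ᵥ (P i).mulVec ((C i).mulVec ((W i).mulVec z))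
            - ((W i).mulVec z) ⬝ᵥ (W i * (T i)ᵀ * P i * T i * (W i)ᵀ).mulVec ((W i).mulVec z)))
      ≤ ∑ i, (-(((W i).mulVec z) ⬝ᵥ (Qbar i + (K i)ᵀ * R i * K i).mulVec ((W i).mulVec z))
          + ((W i).mulVec z) ⬝ᵥ (Γ i).mulVec ((W i).mulVec z)) :=
        Finset.sum_le_sum fun i _ => hterm i
    _ = -(∑ i, ((W i).mulVec z) ⬝ᵥ (Qbar i + (K i)ᵀ * R i * K i).mulVec ((W i).mulVec z))
        + ∑ i, ((W i).mulVec z) ⬝ᵥ (Γ i).mulVec ((W i).mulVec z) := by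
        rw [Finset.sum_add_distrib, Finset.sum_neg_distrib]
    _ ≤ -∑ i, ((W i).mulVec z) ⬝ᵥ (Qbar i + (K i)ᵀ * R i * K i).mulVec ((W i).mulVec z) := by
        linarith
end

section
/- Let E be an n×n symmetric positive definite matrix, Y a k×n matrix, A, C n×n matrices, B, D n×k matrices, Q ⪰ 0 and R ≻ 0 symmetric, and F an n×n symmetric matrix. Set P = E⁻¹, K = Y E⁻¹, Γ = E⁻¹ F E⁻¹. If the block matrix [[E + F, (AE+BY)ᵀ, (CE+DY)ᵀ, (Q^{1/2}E)ᵀ, (R^{1/2}Y)ᵀ], [AE+BY, E, 0, 0, 0], [CE+DY, 0, E, 0, 0], [Q^{1/2}E, 0, 0, I, 0], [R^{1/2}Y, 0, 0, 0, I]] is positive semidefinite, then (A+BK)ᵀ P (A+BK) + (C+DK)ᵀ P (C+DK) - P ⪯ -(Q + Kᵀ R K) + Γ. -/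
set_option maxHeartbeats 1000000


open Matrix

/-- Single-system version of Lemma 2: the LMI reformulation of the terminal
cost decrease condition with relaxation term `Γ = E⁻¹FE⁻¹`, where `P = E⁻¹`,
`K = Y E⁻¹`, obtained via congruence transformation and Schur complement. -/
theorem terminal_cost_lmi {n k : ℕ}
    (E F : Matrix (Fin n) (Fin n) ℝ) (hE : E.PosDef) (hF : F.IsSymm)
    (Y : Matrix (Fin k) (Fin n) ℝ)
    (A C : Matrix (Fin n) (Fin n) ℝ) (B D : Matrix (Fin n) (Fin k) ℝ)
    (Q Qs : Matrix (Fin n) (Fin n) ℝ) (R Rs : Matrix (Fin k) (Fin k) ℝ)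
    (hQ : Q.PosSemidef) (hR : R.PosDef)
    (hQs : Qs.PosSemidef) (hQs2 : Qs * Qs = Q)
    (hRs : Rs.PosSemidef) (hRs2 : Rs * Rs = R)
    (hLMI : (fromBlocks (E + F)
        (fromCols (A * E + B * Y)ᵀ
          (fromCols (C * E + D * Y)ᵀ
            (fromCols (Qs * E)ᵀ (Rs * Y)ᵀ)))
        (fromRows (A * E + B * Y)
          (fromRows (C * E + D * Y)
            (fromRows (Qs * E) (Rs * Y))))
        (fromBlocks E 0 0
          (fromBlocks E 0 0
            (fromBlocks (1 : Matrix (Fin n) (Fin n) ℝ) 0 0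
              (1 : Matrix (Fin k) (Fin k) ℝ))))).PosSemidef) :
    ((-(Q + (Y * E⁻¹)ᵀ * R * (Y * E⁻¹)) + E⁻¹ * F * E⁻¹)
      - ((A + B * (Y * E⁻¹))ᵀ * E⁻¹ * (A + B * (Y * E⁻¹))
          + (C + D * (Y * E⁻¹))ᵀ * E⁻¹ * (C + D * (Y * E⁻¹))
          - E⁻¹)).PosSemidef := by
  have hdet : IsUnit E.det := hE.det_pos.ne'.isUnit
  set K := Y * E⁻¹ with hK
  set W : Matrix (Fin n ⊕ (Fin n ⊕ (Fin n ⊕ (Fin n ⊕ Fin k)))) (Fin n) ℝ :=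
    fromRows E⁻¹
      (fromRows (-(E⁻¹ * (A + B * K)))
        (fromRows (-(E⁻¹ * (C + D * K)))
          (fromRows (-Qs) (-(Rs * K))))) with hW
  have h := hLMI.conjTranspose_mul_mul_same W
  have hWc : Wᴴ = Wᵀ := by ext i j; simp [conjTranspose_apply]
  rw [hWc] at h
  convert h using 1
  have hEt : Eᵀ = E := hE.isHermitian.eq
  have hEit : E⁻¹ᵀ = E⁻¹ := by rw [transpose_nonsing_inv, hEt]
  have hQst : Qsᵀ = Qs := hQs.isHermitian.eq
  have hRst : Rsᵀ = Rs := hRs.isHermitian.eq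
  rw [hW]
  simp only [transpose_fromRows, transpose_neg, transpose_mul, transpose_add, hEt, hEit,
    hQst, hRst, hK]
  have hRs2' : ∀ (m : ℕ) (X : Matrix (Fin m) (Fin k) ℝ), X * Rs * Rs = X * R := by
    intro m X; rw [Matrix.mul_assoc, hRs2]
  have hQs2' : ∀ (m : ℕ) (X : Matrix (Fin m) (Fin n) ℝ), X * Qs * Qs = X * Q := by
    intro m X; rw [Matrix.mul_assoc, hQs2]
  rw [fromCols_mul_fromBlocks]
  rw [fromCols_mul_fromRows]
  simp only [fromCols_mul_fromRows, fromBlocks_mul_fromRows, fromCols_mul_fromBlocks, Matrix.mul_fromCols, Matrix.fromRows_mul,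
    Matrix.mul_neg, Matrix.neg_mul, Matrix.zero_mul, Matrix.mul_zero, Matrix.one_mul,
    Matrix.mul_one, add_zero, zero_add, neg_neg, transpose_mul, transpose_add, hEt, hEit,
    hQst, hRst, Matrix.mul_add, Matrix.add_mul, ← Matrix.mul_assoc,
    Matrix.mul_nonsing_inv_cancel_right _ _ hdet,
    Matrix.nonsing_inv_mul_cancel_right _ _ hdet,
    Matrix.mul_nonsing_inv_cancel_left _ _ hdet, Matrix.nonsing_inv_mul_cancel_left _ _ hdet,
    Matrix.nonsing_inv_mul E hdet, Matrix.mul_nonsing_inv E hdet, hQs2, hRs2, hQs2', hRs2']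
  noncomm_ring
end

section
/- Let A_K and C_K be n×n real matrices and suppose there exists a symmetric positive definite P and ρ ∈ (0,1) with A_Kᵀ P A_K + C_Kᵀ P C_K ⪯ ρ P. Then for any symmetric Ψ ⪰ 0, the linear map Σ ↦ A_K Σ A_Kᵀ + C_K Σ C_Kᵀ + C_K Ψ C_Kᵀ on symmetric matrices has a unique positive semidefinite fixed point Σ_f, given by Σ_f = Σ_{j=0}^∞ L^j(C_K Ψ C_Kᵀ) where L(Σ) = A_K Σ A_Kᵀ + C_K Σ C_Kᵀ. -/
open Matrix

section TCAux

variable {n : ℕ}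

lemma tc_diag_nonneg {M : Matrix (Fin n) (Fin n) ℝ} (hM : M.PosSemidef) (i : Fin n) :
    0 ≤ M i i := by
  have h := hM.dotProduct_mulVec_nonneg (Pi.single i 1)
  simpa [dotProduct, mulVec, Pi.single_apply, Finset.sum_ite_eq] using h

lemma tc_trace_nonneg {M : Matrix (Fin n) (Fin n) ℝ} (hM : M.PosSemidef) : 0 ≤ M.trace :=
  Finset.sum_nonneg fun i _ => tc_diag_nonneg hM i

lemma tc_trace_mul_nonneg {A B : Matrix (Fin n) (Fin n) ℝ} (hA : A.PosSemidef)
    (hB : B.PosSemidef) : 0 ≤ (A * B).trace := by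
  obtain ⟨X, rfl⟩ : ∃ X : Matrix (Fin n) (Fin n) ℝ, A = Xᴴ * X := by
    open scoped MatrixOrder in
    exact ⟨CFC.sqrt A, by
      rw [(CFC.sqrt_nonneg A).posSemidef.1.eq, CFC.sqrt_mul_sqrt_self A hA.nonneg]⟩
  rw [mul_assoc, trace_mul_comm]
  exact tc_trace_nonneg (hB.mul_mul_conjTranspose_same X)

lemma tc_diag_le_trace {M : Matrix (Fin n) (Fin n) ℝ} (hM : M.PosSemidef) (i : Fin n) :
    M i i ≤ M.trace :=
  Finset.single_le_sum (f := fun j => M j j) (fun j _ => tc_diag_nonneg hM j)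
    (Finset.mem_univ i)

lemma tc_quad_ineq {M : Matrix (Fin n) (Fin n) ℝ} (hM : M.PosSemidef) (i k : Fin n) :
    0 ≤ M i i + M k i + (M i k + M k k) ∧ 0 ≤ M i i + -M k i + (M k k + -M i k) := by
  constructor
  · have h := hM.dotProduct_mulVec_nonneg (Pi.single i 1 + Pi.single k 1)
    simpa [Pi.single_apply, dotProduct, mulVec, mul_add, add_mul, mul_ite, ite_mul,
      Finset.sum_add_distrib, Finset.sum_ite_eq, Finset.sum_ite_eq'] using h
  · have h := hM.dotProduct_mulVec_nonneg (Pi.single i 1 - Pi.single k 1)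
    simpa [Pi.single_apply, dotProduct, mulVec, mul_add, add_mul, mul_ite, ite_mul,
      Finset.sum_add_distrib, Finset.sum_ite_eq, Finset.sum_ite_eq', sub_eq_add_neg,
      neg_mul, mul_neg, Finset.sum_neg_distrib] using h

lemma tc_abs_entry_le_trace {M : Matrix (Fin n) (Fin n) ℝ} (hM : M.PosSemidef) (i k : Fin n) :
    |M i k| ≤ M.trace := by
  obtain ⟨h1, h2⟩ := tc_quad_ineq hM i k
  have hik : M k i = M i k := by
    have := congrFun (congrFun hM.1 i) k
    simpa [conjTranspose_apply] using this
  have hi := tc_diag_le_trace hM i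
  have hk := tc_diag_le_trace hM k
  rw [hik] at h1 h2
  rcases abs_cases (M i k) with ⟨he, _⟩ | ⟨he, _⟩ <;> rw [he] <;> linarith

lemma tc_exists_eps {P : Matrix (Fin n) (Fin n) ℝ} (hP : P.PosDef) :
    ∃ ε : ℝ, 0 < ε ∧ (P - ε • 1).PosSemidef := by
  rcases isEmpty_or_nonempty (Fin n) with hE | hNE
  · refine ⟨1, one_pos, ⟨?_, fun x => ?_⟩⟩
    · ext i j; exact hE.elim i
    · rw [show x = 0 from Finsupp.ext fun i => hE.elim i]; simp
  · have hH := hP.1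
    set ε := Finset.univ.inf' Finset.univ_nonempty hH.eigenvalues with hεdef
    have hε : 0 < ε := by
      rw [hεdef, Finset.lt_inf'_iff]
      exact fun i _ => hP.eigenvalues_pos i
    refine ⟨ε, hε, ?_⟩
    set U : Matrix (Fin n) (Fin n) ℝ := (hH.eigenvectorUnitary : Matrix (Fin n) (Fin n) ℝ)
      with hUdef
    have hU : U * Uᴴ = 1 := by
      rw [← star_eq_conjTranspose]
      exact Matrix.mem_unitaryGroup_iff.mp hH.eigenvectorUnitary.2
    have hspec : P = U * diagonal hH.eigenvalues * Uᴴ := by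
      have h := hH.spectral_theorem
      rw [Unitary.conjStarAlgAut_apply, star_eq_conjTranspose, ← hUdef] at h
      exact h
    have key : P - ε • 1 = U * diagonal (fun i => hH.eigenvalues i - ε) * Uᴴ := by
      have : diagonal (fun i => hH.eigenvalues i - ε)
          = diagonal hH.eigenvalues - ε • (1 : Matrix (Fin n) (Fin n) ℝ) := by
        rw [smul_one_eq_diagonal, ← diagonal_sub]
      rw [this, mul_sub, sub_mul, ← hspec]
      congr 1
      rw [mul_smul_comm, smul_mul_assoc, mul_one, hU]
    rw [key]
    exact (posSemidef_diagonal_iff.mpr fun i =>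
      sub_nonneg.2 (Finset.inf'_le _ (Finset.mem_univ i))).mul_mul_conjTranspose_same U

/-- The Lyapunov operator as a linear map on matrices. -/
def tcL (AK CK : Matrix (Fin n) (Fin n) ℝ) :
    Matrix (Fin n) (Fin n) ℝ →ₗ[ℝ] Matrix (Fin n) (Fin n) ℝ where
  toFun S := AK * S * AKᵀ + CK * S * CKᵀ
  map_add' S T := by noncomm_ring
  map_smul' c S := by simp [mul_smul_comm, smul_mul_assoc, smul_add]

/-- The quadratic-form functional `M ↦ xᵀ M x` as a linear map. -/
def tcQuad (x : Fin n → ℝ) : Matrix (Fin n) (Fin n) ℝ →ₗ[ℝ] ℝ where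
  toFun M := dotProduct (star x) (M *ᵥ x)
  map_add' M N := by simp [add_mulVec, dotProduct_add]
  map_smul' c M := by simp [smul_mulVec, dotProduct_smul]

end TCAux

/-- Under mean-square stability `A_KᵀPA_K + C_KᵀPC_K ⪯ ρP` with `ρ ∈ (0,1)`,
the Lyapunov-type map `Σ ↦ A_K Σ A_Kᵀ + C_K Σ C_Kᵀ + C_K Ψ C_Kᵀ` has a unique
positive semidefinite fixed point, given by the series
`Σ_f = Σ_{j≥0} L^j(C_K Ψ C_Kᵀ)` with `L(Σ) = A_K Σ A_Kᵀ + C_K Σ C_Kᵀ`. -/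
theorem terminal_covariance_fixed_point {n : ℕ}
    (AK CK : Matrix (Fin n) (Fin n) ℝ)
    (P : Matrix (Fin n) (Fin n) ℝ) (hP : P.PosDef)
    (ρ : ℝ) (hρ : ρ ∈ Set.Ioo (0:ℝ) 1)
    (hcontr : (ρ • P - (AKᵀ * P * AK + CKᵀ * P * CK)).PosSemidef)
    (Ψ : Matrix (Fin n) (Fin n) ℝ) (hΨ : Ψ.PosSemidef) :
    ∃ Sf : Matrix (Fin n) (Fin n) ℝ,
      Sf = (∑' j : ℕ,
        (fun S : Matrix (Fin n) (Fin n) ℝ =>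
          AK * S * AKᵀ + CK * S * CKᵀ)^[j] (CK * Ψ * CKᵀ)) ∧
      Sf.PosSemidef ∧
      Sf = AK * Sf * AKᵀ + CK * Sf * CKᵀ + CK * Ψ * CKᵀ ∧
      ∀ S' : Matrix (Fin n) (Fin n) ℝ, S'.PosSemidef →
        S' = AK * S' * AKᵀ + CK * S' * CKᵀ + CK * Ψ * CKᵀ → S' = Sf := by
  obtain ⟨hρ0, hρ1⟩ := hρ
  obtain ⟨ε, hε, hPε⟩ := tc_exists_eps hP
  set L : Matrix (Fin n) (Fin n) ℝ → Matrix (Fin n) (Fin n) ℝ :=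
    fun S => AK * S * AKᵀ + CK * S * CKᵀ with hLdef
  set Q : Matrix (Fin n) (Fin n) ℝ := CK * Ψ * CKᵀ with hQdef
  have hLlin : ∀ S, tcL AK CK S = L S := fun S => rfl
  -- L preserves PSD
  have hLpsd : ∀ S : Matrix (Fin n) (Fin n) ℝ, S.PosSemidef → (L S).PosSemidef := by
    intro S hS
    have h1 := hS.mul_mul_conjTranspose_same AK
    have h2 := hS.mul_mul_conjTranspose_same CK
    rw [conjTranspose_eq_transpose_of_trivial] at h1 h2
    exact h1.add h2
  have hQpsd : Q.PosSemidef := by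
    have := hΨ.mul_mul_conjTranspose_same CK
    rwa [conjTranspose_eq_transpose_of_trivial] at this
  -- trace contraction
  have htraceL : ∀ S : Matrix (Fin n) (Fin n) ℝ, S.PosSemidef →
      (P * L S).trace ≤ ρ * (P * S).trace := by
    intro S hS
    have h := tc_trace_mul_nonneg hcontr hS
    rw [sub_mul, trace_sub, smul_mul_assoc, trace_smul, smul_eq_mul] at h
    have he : (P * L S).trace = ((AKᵀ * P * AK + CKᵀ * P * CK) * S).trace := by
      rw [hLdef]
      simp only [mul_add, trace_add, add_mul, trace_add]
      congr 1
      · rw [show P * (AK * S * AKᵀ) = P * AK * S * AKᵀ by noncomm_ring,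
          trace_mul_comm (P * AK * S) AKᵀ, show AKᵀ * (P * AK * S) = AKᵀ * P * AK * S by
            noncomm_ring]
      · rw [show P * (CK * S * CKᵀ) = P * CK * S * CKᵀ by noncomm_ring,
          trace_mul_comm (P * CK * S) CKᵀ, show CKᵀ * (P * CK * S) = CKᵀ * P * CK * S by
            noncomm_ring]
    rw [he]
    linarith
  -- trace lower bound via ε
  have htrP : ∀ S : Matrix (Fin n) (Fin n) ℝ, S.PosSemidef →
      S.trace ≤ ε⁻¹ * (P * S).trace := by
    intro S hS
    have h := tc_trace_mul_nonneg hPε hS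
    rw [sub_mul, trace_sub, smul_mul_assoc, one_mul, trace_smul, smul_eq_mul,
      sub_nonneg] at h
    rw [← mul_le_mul_iff_right₀ hε]
    calc ε * S.trace ≤ (P * S).trace := h
    _ = ε * (ε⁻¹ * (P * S).trace) := by field_simp
  -- iterate bounds
  set f : ℕ → Matrix (Fin n) (Fin n) ℝ := fun j => L^[j] Q with hfdef
  have hiter : ∀ S : Matrix (Fin n) (Fin n) ℝ, S.PosSemidef → ∀ j : ℕ,
      (L^[j] S).PosSemidef ∧ (P * L^[j] S).trace ≤ ρ ^ j * (P * S).trace := by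
    intro S hS j
    induction j with
    | zero => exact ⟨by simpa using hS, by simp⟩
    | succ j ih =>
      obtain ⟨hpsd, htr⟩ := ih
      rw [Function.iterate_succ_apply']
      refine ⟨hLpsd _ hpsd, ?_⟩
      calc (P * L (L^[j] S)).trace ≤ ρ * (P * L^[j] S).trace := htraceL _ hpsd
        _ ≤ ρ * (ρ ^ j * (P * S).trace) := by
            exact mul_le_mul_of_nonneg_left htr (le_of_lt hρ0)
        _ = ρ ^ (j + 1) * (P * S).trace := by ring
  -- entrywise bound
  have hentry : ∀ S : Matrix (Fin n) (Fin n) ℝ, S.PosSemidef → ∀ j : ℕ, ∀ i k : Fin n,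
      |(L^[j] S) i k| ≤ ε⁻¹ * (P * S).trace * ρ ^ j := by
    intro S hS j i k
    obtain ⟨hpsd, htr⟩ := hiter S hS j
    calc |(L^[j] S) i k| ≤ (L^[j] S).trace := tc_abs_entry_le_trace hpsd i k
      _ ≤ ε⁻¹ * (P * L^[j] S).trace := htrP _ hpsd
      _ ≤ ε⁻¹ * (ρ ^ j * (P * S).trace) :=
          mul_le_mul_of_nonneg_left htr (inv_nonneg.mpr (le_of_lt hε))
      _ = ε⁻¹ * (P * S).trace * ρ ^ j := by ring
  -- summability
  have hgeo : Summable (fun j : ℕ => ε⁻¹ * (P * Q).trace * ρ ^ j) :=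
    (summable_geometric_of_lt_one (le_of_lt hρ0) hρ1).mul_left _
  have hsum : Summable f := by
    have hone : ∀ i k : Fin n, Summable (fun j => f j i k) := by
      intro i k
      refine Summable.of_norm_bounded hgeo ?_
      intro j
      simpa [Real.norm_eq_abs] using hentry Q hQpsd j i k
    refine (Pi.summable (f := fun j => (f j : Fin n → Fin n → ℝ))).mpr ?_
    intro i
    rw [Pi.summable]
    exact fun k => hone i k
  -- the candidate fixed point
  set Sf : Matrix (Fin n) (Fin n) ℝ := ∑' j, f j with hSfdef
  -- Sf is PSD
  have hpsd : Sf.PosSemidef := by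
    refine PosSemidef.of_dotProduct_mulVec_nonneg ?_ ?_
    · have herm : ∀ j, (f j)ᵀ = f j := by
        intro j
        have h : (L^[j] Q)ᴴ = L^[j] Q := (hiter Q hQpsd j).1.1
        rwa [conjTranspose_eq_transpose_of_trivial] at h
      show Sfᴴ = Sf
      rw [conjTranspose_eq_transpose_of_trivial, hSfdef, Matrix.transpose_tsum]
      exact tsum_congr herm
    · intro x
      have hhs : HasSum (fun j => tcQuad x (f j)) (tcQuad x Sf) :=
        hsum.hasSum.map (tcQuad x).toAddMonoidHom
          (LinearMap.continuous_of_finiteDimensional _)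
      have h0 : 0 ≤ tcQuad x Sf := by
        rw [← hhs.tsum_eq]
        exact tsum_nonneg fun j => (hiter Q hQpsd j).1.dotProduct_mulVec_nonneg x
      exact h0
  -- Sf is a fixed point
  have hmap : HasSum (fun j => L (f j)) (L Sf) := by
    have h := hsum.hasSum.map (tcL AK CK).toAddMonoidHom
      (LinearMap.continuous_of_finiteDimensional _)
    simpa [hLlin, Function.comp_def, ← hSfdef] using h
  have hshift : (fun j => L (f j)) = fun j => f (j + 1) :=
    funext fun j => (Function.iterate_succ_apply' L j Q).symm
  rw [hshift] at hmap
  have hfixSf : Sf = L Sf + Q := by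
    have heq : ∑' j, f j = f 0 + ∑' j, f (j + 1) := Summable.tsum_eq_zero_add hsum
    conv_lhs => rw [hSfdef, heq]
    rw [hmap.tsum_eq, show f 0 = Q from rfl, add_comm]
  refine ⟨Sf, rfl, hpsd, ?_, ?_⟩
  · calc Sf = L Sf + Q := hfixSf
      _ = AK * Sf * AKᵀ + CK * Sf * CKᵀ + CK * Ψ * CKᵀ := rfl
  · intro S' hS' h'
    have h'' : S' = L S' + Q := h'
    have hdiff : ∀ j : ℕ, L^[j] S' - L^[j] Sf = S' - Sf := by
      intro j
      induction j with
      | zero => simp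
      | succ j ih =>
        rw [Function.iterate_succ_apply', Function.iterate_succ_apply']
        have e1 : L (L^[j] S') - L (L^[j] Sf) = L (L^[j] S' - L^[j] Sf) := by
          rw [← hLlin, ← hLlin, ← hLlin, ← map_sub]
        rw [e1, ih]
        have e2 : L (S' - Sf) = L S' - L Sf := by
          rw [← hLlin, ← hLlin, ← hLlin, map_sub]
        rw [e2]
        conv_rhs => rw [h'', hfixSf]
        abel
    have hentries : ∀ i k : Fin n, S' i k = Sf i k := by
      intro i k
      have hb : ∀ j : ℕ, |S' i k - Sf i k| ≤
          (ε⁻¹ * (P * S').trace + ε⁻¹ * (P * Sf).trace) * ρ ^ j := by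
        intro j
        have h1 := hentry S' hS' j i k
        have h2 := hentry Sf hpsd j i k
        have hd : S' i k - Sf i k = (L^[j] S') i k - (L^[j] Sf) i k := by
          have := congrFun (congrFun (hdiff j) i) k
          simpa [Matrix.sub_apply] using this.symm
        rw [hd]
        calc |(L^[j] S') i k - (L^[j] Sf) i k|
            ≤ |(L^[j] S') i k| + |(L^[j] Sf) i k| := abs_sub _ _
          _ ≤ ε⁻¹ * (P * S').trace * ρ ^ j + ε⁻¹ * (P * Sf).trace * ρ ^ j := add_le_add h1 h2
          _ = (ε⁻¹ * (P * S').trace + ε⁻¹ * (P * Sf).trace) * ρ ^ j := by ring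
      have htend : Filter.Tendsto
          (fun j : ℕ => (ε⁻¹ * (P * S').trace + ε⁻¹ * (P * Sf).trace) * ρ ^ j)
          Filter.atTop (nhds 0) := by
        simpa using
          (tendsto_pow_atTop_nhds_zero_of_lt_one (le_of_lt hρ0) hρ1).const_mul
            (ε⁻¹ * (P * S').trace + ε⁻¹ * (P * Sf).trace)
      have hle : |S' i k - Sf i k| ≤ 0 := ge_of_tendsto' htend hb
      have := abs_nonpos_iff.mp hle
      linarith [sub_eq_zero.mp this]
    ext i k
    exact hentries i k
end
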